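/- In a finite level-aware conflict graph, there exists a unique First-UIP: a UIP u such that no other UIP is reachable from u by a directed path. -/

import Mathlib

inductive Lit (V : Type) where
  | pos : V → Lit V
  | neg : V → Lit V
deriving DecidableEq

def Lit.compl {V : Type} : Lit V → Lit V
  | .pos v => .neg v
  | .neg v => .pos v

/-- `l` is a (directed) path from `a` to `b` along the edge relation `E`. -/
def IsPath {α : Type} (E : α → α → Prop) (l : List α) (a b : α) : Prop :=
  l.Chain' E ∧ l.head? = some a ∧ l.getLast? = some b

/-- A UIP for the conflict level: a node through which every path from the
decision literal `σd` to a conflicting literal passes. -/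
def IsUIP {V : Type} (nodes : Finset (Lit V)) (E : Lit V → Lit V → Prop)
    (σ σd u : Lit V) : Prop :=
  u ∈ nodes ∧
  ∀ (l : List (Lit V)) (c : Lit V), (c = σ ∨ c = Lit.compl σ) →
    IsPath E l σd c → u ∈ l

/-!
Fix a path `l` from `σd` to `σ`. Every UIP lies on `l`, and `l` is a chain, so each node of `l`
reaches every later one. Hence the UIP occurring last on `l` is reached from every other UIP;
by acyclicity it reaches none of them, and every other UIP reaches it, so it is the only
First-UIP. Such a last UIP exists because `σd` is a UIP.
-/

theorem List.Pairwise.exists_forall_rel_of_exists_mem {α : Type*} {R : α → α → Prop}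
    {p : α → Prop} {l : List α} (hl : l.Pairwise R) (hp : ∃ a ∈ l, p a) :
    ∃ u ∈ l, p u ∧ ∀ v ∈ l, p v → v ≠ u → R v u := by
  induction l with
  | nil => simp at hp
  | cons a t ih =>
    rw [List.pairwise_cons] at hl
    by_cases ht : ∃ b ∈ t, p b
    · obtain ⟨u, hut, hpu, hu⟩ := ih hl.2 ht
      refine ⟨u, List.mem_cons_of_mem a hut, hpu, fun v hv hpv hvu => ?_⟩
      rcases List.mem_cons.mp hv with rfl | hvt
      · exact hl.1 u hut
      · exact hu v hvt hpv hvu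
    · push Not at ht
      obtain ⟨b, hb, hpb⟩ := hp
      have hba : b = a := (List.mem_cons.mp hb).resolve_right fun hbt => ht b hbt hpb
      refine ⟨a, List.mem_cons_self, hba ▸ hpb, fun v hv hpv hva => ?_⟩
      rcases List.mem_cons.mp hv with rfl | hvt
      · exact absurd rfl hva
      · exact absurd hpv (ht v hvt)

theorem existsUnique_forall_not_rel_of_forall_rel {α : Type*} {R : α → α → Prop} [IsTrans α R]
    (hirr : ∀ a, ¬ R a a) {p : α → Prop} {u : α} (hu : p u)
    (hmax : ∀ v, p v → v ≠ u → R v u) :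
    ∃! u, p u ∧ ∀ v, p v → v ≠ u → ¬ R u v := by
  refine ⟨u, ⟨hu, fun v hv hvu huv => hirr u (_root_.trans huv (hmax v hv hvu))⟩, ?_⟩
  rintro w ⟨hw, hwmax⟩
  by_contra hwu
  exact hwmax u hu (Ne.symm hwu) (hmax w hw hwu)

theorem exists_isPath_of_reflTransGen {α : Type} {E : α → α → Prop} {a b : α}
    (h : Relation.ReflTransGen E a b) : ∃ l, IsPath E l a b := by
  obtain ⟨l, hne, hchain, hhead, hlast⟩ := List.exists_isChain_ne_nil_of_relationReflTransGen h
  exact ⟨l, hchain, by rw [List.head?_eq_some_head hne, hhead],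
    by rw [List.getLast?_eq_some_getLast hne, hlast]⟩

theorem isUIP_decision {V : Type} {nodes : Finset (Lit V)} {E : Lit V → Lit V → Prop}
    {σ σd : Lit V} (hσd : σd ∈ nodes) : IsUIP nodes E σ σd σd :=
  ⟨hσd, fun _ _ _ hl => List.mem_of_mem_head? hl.2.1⟩

theorem stmt12_general {V : Type}
    (nodes : Finset (Lit V)) (E : Lit V → Lit V → Prop)
    (σ σd : Lit V)
    (hσd : σd ∈ nodes)
    (hacyc : ∀ a, ¬ Relation.TransGen E a a)
    -- both conflicting literals are reachable from the decision literal
    (hreach : Relation.ReflTransGen E σd σ ∧ Relation.ReflTransGen E σd σ.compl) :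
    ∃! u : Lit V, IsUIP nodes E σ σd u ∧
      ∀ v : Lit V, IsUIP nodes E σ σd v → v ≠ u → ¬ Relation.TransGen E u v := by
  obtain ⟨l, hl⟩ := exists_isPath_of_reflTransGen hreach.1
  have hpw : l.Pairwise (Relation.TransGen E) :=
    List.isChain_iff_pairwise.mp (hl.1.imp fun _ _ => .single)
  obtain ⟨u, -, hu, hlast⟩ :=
    hpw.exists_forall_rel_of_exists_mem ⟨σd, List.mem_of_mem_head? hl.2.1, isUIP_decision hσd⟩
  exact existsUnique_forall_not_rel_of_forall_rel hacyc hu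
    fun v hv => hlast v (hv.2 l σ (.inl rfl) hl) hv

/-- a finite level-aware conflict graph has a unique First-UIP:
a UIP `u` from which no other UIP is reachable by a directed path. -/
theorem stmt12 {V : Type} [DecidableEq V]
    (nodes : Finset (Lit V)) (E : Lit V → Lit V → Prop) (dl : Lit V → ℕ)
    (σ σd : Lit V)
    (hσ : σ ∈ nodes) (hσc : σ.compl ∈ nodes) (hσd : σd ∈ nodes)
    (hE : ∀ a b, E a b → a ∈ nodes ∧ b ∈ nodes)
    (hacyc : ∀ a, ¬ Relation.TransGen E a a)
    (hdlσd : dl σd = dl σ) (hdlσc : dl σ.compl = dl σ)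
    (hσne : σ ≠ σd) (hσcne : σ.compl ≠ σd)
    (hdec : ∀ a, ¬ E a σd)
    -- level-awareness
    (hla : (∃ p, E p σ ∧ dl p = dl σ) ∧ (∃ p, E p σ.compl ∧ dl p = dl σ))
    -- both conflicting literals are reachable from the decision literal
    (hreach : Relation.ReflTransGen E σd σ ∧ Relation.ReflTransGen E σd σ.compl) :
    ∃! u : Lit V, IsUIP nodes E σ σd u ∧
      ∀ v : Lit V, IsUIP nodes E σ σd v → v ≠ u → ¬ Relation.TransGen E u v :=
  stmt12_general nodes E σ σd hσd hacyc hreach
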